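/- Let n ≥ 1 and define P : ℝ → ℝ^{4n} → ℝ³ → ℂ by P t x z := ∫_{τ ∈ ℝ³} exp( -( i·⟨τ, z⟩ + (1/2)·‖τ‖·(cosh ‖τ‖ / sinh ‖τ‖)·‖x‖² ) / t ) · ( ‖τ‖ / sinh ‖τ‖ )^{2n} dτ. Then for every s with 0 < s < 1, all α, β ∈ {1,…,4n} and every i ∈ {1,2,3}: ∫_{(x,z) ∈ ℝ^{4n} × ℝ³} P (1-s) x z · x_α · x_β · (∂_{z_i} P) s x z d(x,z) = 0, where ∂_{z_i}P s x z denotes the Fréchet derivative of the map z ↦ P s x z at z applied to the i-th standard basis vector of ℝ³, x_α is the α-th coordinate of x, and the integral is over ℝ^{4n} × ℝ³ with Lebesgue measure. -/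

import Mathlib

open RealInnerProductSpace MeasureTheory

/-- The Beals–Gaveau–Greiner heat kernel (unnormalized) of the intrinsic sublaplacian on
the quaternionic Heisenberg group. -/
noncomputable def bggKernel (n : ℕ) (t : ℝ) (x : EuclideanSpace ℝ (Fin (4 * n)))
    (z : EuclideanSpace ℝ (Fin 3)) : ℂ :=
  ∫ τ : EuclideanSpace ℝ (Fin 3),
    Complex.exp (-((Complex.I * ((⟪τ, z⟫ : ℝ) : ℂ) +
        (((1 / 2 : ℝ) * ‖τ‖ * (Real.cosh ‖τ‖ / Real.sinh ‖τ‖) * ‖x‖ ^ 2 : ℝ) : ℂ)) /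
        (t : ℂ))) *
      (((‖τ‖ / Real.sinh ‖τ‖ : ℝ) : ℂ)) ^ (2 * n)

/-!
The integrand is odd under `(x, z) ↦ (-x, -z)`: the kernel depends on `x` only through `‖x‖`
and is even in `z` (substitute `τ ↦ -τ`), so its `z`-derivative is odd in `z`, while
`x_α x_β` is even. Lebesgue measure is invariant under negation, so the integral vanishes.
-/

theorem Function.Odd.integral_eq_zero {G E : Type*} [MeasurableSpace G] [AddGroup G]
    [MeasurableNeg G] [NormedAddCommGroup E] [NormedSpace ℝ E] {μ : Measure G}
    [μ.IsNegInvariant] {f : G → E} (hf : f.Odd) : ∫ x, f x ∂μ = 0 := by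
  have h := integral_neg_eq_self f μ
  simp only [hf.eq, integral_neg] at h
  linear_combination (norm := module) (-(1 / 2 : ℝ)) • h

theorem Function.Even.fderiv_apply {𝕜 E F : Type*} [NontriviallyNormedField 𝕜]
    [NormedAddCommGroup E] [NormedSpace 𝕜 E] [NormedAddCommGroup F] [NormedSpace 𝕜 F]
    {g : E → F} (hg : g.Even) (v : E) : Function.Odd fun z => fderiv 𝕜 g z v := by
  intro z
  have hcomp : g ∘ ContinuousLinearEquiv.neg 𝕜 = g := funext hg
  have h := (ContinuousLinearEquiv.neg 𝕜 (M := E)).comp_right_fderiv (f := g) (x := -z)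
  rw [hcomp] at h
  simp [h]

section bggKernel

variable (n : ℕ) (t : ℝ) (x : EuclideanSpace ℝ (Fin (4 * n)))

theorem bggKernel_neg_left (z : EuclideanSpace ℝ (Fin 3)) :
    bggKernel n t (-x) z = bggKernel n t x z := by
  simp only [bggKernel, norm_neg]

theorem bggKernel_even : (bggKernel n t x).Even := fun z => by
  rw [bggKernel, ← integral_neg_eq_self]
  simp only [inner_neg_neg, norm_neg, bggKernel]

end bggKernel

theorem integral_xx_dz_bggKernel_eq_zero
    (n : ℕ) (s : ℝ)
    (α β : Fin (4 * n)) (i : Fin 3) :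
    ∫ p : EuclideanSpace ℝ (Fin (4 * n)) × EuclideanSpace ℝ (Fin 3),
      bggKernel n (1 - s) p.1 p.2 * (p.1 α : ℂ) * (p.1 β : ℂ) *
        fderiv ℝ (fun z => bggKernel n s p.1 z) p.2 (EuclideanSpace.single i 1)
      = 0 := by
  rw [Measure.volume_eq_prod]
  -- negation invariance comes from Haar-measure regularity, an instance path beyond the default size
  set_option synthInstance.maxSize 512 in
  refine Function.Odd.integral_eq_zero ?_
  have hP : Function.Even fun p : EuclideanSpace ℝ (Fin (4 * n)) × EuclideanSpace ℝ (Fin 3) =>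
      bggKernel n (1 - s) p.1 p.2 := fun p => by
    simp only [Prod.fst_neg, Prod.snd_neg, bggKernel_neg_left, bggKernel_even n (1 - s) p.1 p.2]
  have hcoord (j : Fin (4 * n)) : Function.Odd
      fun p : EuclideanSpace ℝ (Fin (4 * n)) × EuclideanSpace ℝ (Fin 3) => ((p.1 j : ℝ) : ℂ) :=
    fun p => by simp
  have hD : Function.Odd fun p : EuclideanSpace ℝ (Fin (4 * n)) × EuclideanSpace ℝ (Fin 3) =>
      fderiv ℝ (fun z => bggKernel n s p.1 z) p.2 (EuclideanSpace.single i 1) := fun p => by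
    simp only [Prod.fst_neg, Prod.snd_neg, bggKernel_neg_left]
    exact (bggKernel_even n s p.1).fderiv_apply _ p.2
  exact ((hP.mul_odd (hcoord α)).mul_odd (hcoord β)).mul_odd hD
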